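/- Let I be a natural number and let x, y be real numbers with 0 ≤ x ≤ y. Then Σ_{i=I}^{∞} e^{−x} x^i / i! ≤ Σ_{i=I}^{∞} e^{−y} y^i / i!, i.e., the tail of the Poisson weights beyond index I is monotone nondecreasing in the parameter. -/

import Mathlib

open Finset

lemma summ (t : ℝ) : Summable (fun n : ℕ => Real.exp (-t) * t ^ n / n.factorial) := by
  have := Real.summable_pow_div_factorial t
  simpa [mul_div_assoc] using this.mul_left (Real.exp (-t))

lemma total (t : ℝ) : ∑' n : ℕ, Real.exp (-t) * t ^ n / n.factorial = 1 := by
  simp_rw [mul_div_assoc]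
  rw [tsum_mul_left]
  have : ∑' n : ℕ, t ^ n / (n.factorial : ℝ) = Real.exp t := by
    rw [Real.exp_eq_exp_ℝ, NormedSpace.exp_eq_tsum_div]
  rw [this, ← Real.exp_add]
  simp

lemma tail_eq (I : ℕ) (t : ℝ) :
    ∑' i : ℕ, Real.exp (-t) * t ^ (i + I) / (Nat.factorial (i + I)) =
      1 - ∑ n ∈ range I, Real.exp (-t) * t ^ n / n.factorial := by
  have h := (summ t).sum_add_tsum_nat_add I
  rw [total t] at h
  linarith

lemma hder (m : ℕ) (t : ℝ) :
    HasDerivAt (fun t : ℝ => ∑ n ∈ range (m+1), Real.exp (-t) * t ^ n / n.factorial)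
      (-(Real.exp (-t) * t ^ m / m.factorial)) t := by
  have hP : ∀ (k : ℕ), HasDerivAt (fun t : ℝ => ∑ n ∈ range k, t ^ n / n.factorial)
      (∑ n ∈ range k, (n : ℝ) * t ^ (n-1) / n.factorial) t :=
    fun k => HasDerivAt.fun_sum (fun n _ => (hasDerivAt_pow n t).div_const _)
  have key : ∑ n ∈ range (m+1), (n : ℝ) * t ^ (n-1) / n.factorial
      = ∑ n ∈ range m, t ^ n / n.factorial := by
    rw [Finset.sum_range_succ']
    rw [show ((0:ℕ):ℝ) * t ^ (0-1) / (Nat.factorial 0) = 0 by simp, add_zero]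
    apply Finset.sum_congr rfl
    intro n _
    have h1 : (Nat.factorial (n+1) : ℝ) = (n+1) * n.factorial := by
      rw [Nat.factorial_succ]; push_cast; ring
    have h2 : (n.factorial : ℝ) ≠ 0 := Nat.cast_ne_zero.mpr n.factorial_ne_zero
    rw [h1]
    push_cast
    field_simp
  have hPsum := hP (m+1)
  rw [key] at hPsum
  have hE : HasDerivAt (fun t : ℝ => Real.exp (-t)) (-Real.exp (-t)) t := by
    simpa [Function.comp_def] using (Real.hasDerivAt_exp (-t)).comp t (hasDerivAt_neg t)
  have hprod := hE.fun_mul hPsum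
  have heq : -Real.exp (-t) * ∑ n ∈ range (m+1), t ^ n / n.factorial
      + Real.exp (-t) * ∑ n ∈ range m, t ^ n / n.factorial
      = -(Real.exp (-t) * t ^ m / m.factorial) := by
    rw [Finset.sum_range_succ]
    ring
  rw [heq] at hprod
  have hfun : (fun t : ℝ => Real.exp (-t) * ∑ n ∈ range (m+1), t ^ n / n.factorial)
      = fun t : ℝ => ∑ n ∈ range (m+1), Real.exp (-t) * t ^ n / n.factorial := by
    funext t
    rw [Finset.mul_sum]
    simp [mul_div_assoc]
  rw [hfun] at hprod
  exact hprod

lemma hanti (I : ℕ) :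
    AntitoneOn (fun t : ℝ => ∑ n ∈ range I, Real.exp (-t) * t ^ n / n.factorial) (Set.Ici 0) := by
  match I with
  | 0 => simp [antitoneOn_const]
  | (m+1) =>
    apply antitoneOn_of_deriv_nonpos (convex_Ici 0)
    · exact Continuous.continuousOn (by
        continuity)
    · intro t ht
      exact ((hder m t).hasFDerivAt.differentiableAt).differentiableWithinAt
    · intro t ht
      rw [interior_Ici] at ht
      rw [(hder m t).deriv]
      have h0 : (0:ℝ) ≤ t := le_of_lt ht
      rw [neg_nonpos]
      positivity

/-- The tail `Σ_{i=I}^∞ e^{-x} x^i / i!` of the Poisson weights is monotone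
nondecreasing in the parameter: for `0 ≤ x ≤ y` the tail at `x` is at most the tail at `y`. -/
theorem stmt_9 (I : ℕ) (x y : ℝ) (hx : 0 ≤ x) (hxy : x ≤ y) :
    ∑' i : ℕ, Real.exp (-x) * x ^ (i + I) / (Nat.factorial (i + I)) ≤
      ∑' i : ℕ, Real.exp (-y) * y ^ (i + I) / (Nat.factorial (i + I)) := by
  rw [tail_eq, tail_eq]
  have := hanti I hx (le_trans hx hxy) hxy
  linarith
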